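/- The quotient of A*B by the two-sided ideal generated by the two commutators [p₁,q₁] and [p₂,q₁] has finite-dimensional irreducible representations of arbitrarily large dimension: for every natural number n there exists a simple left module over this quotient whose k-dimension is finite and greater than n. -/

import Mathlib

open scoped TensorProduct

/-- A two-element family of types, used to form binary free products. -/
def fam (A B : Type) : Bool → Type
  | true => A
  | false => B

instance famSemiring (A B : Type) [Semiring A] [Semiring B] : ∀ b, Semiring (fam A B b)
  | true => ‹Semiring A›
  | false => ‹Semiring B›

instance famAlgebra (k A B : Type) [CommSemiring k] [Semiring A] [Semiring B]
    [Algebra k A] [Algebra k B] : ∀ b, Algebra k (fam A B b)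
  | true => ‹Algebra k A›
  | false => ‹Algebra k B›

/-- The free product (coproduct in the category of unital associative `k`-algebras)
`A * B` of two `k`-algebras. -/
abbrev FP (k A B : Type) [CommSemiring k] [Semiring A] [Semiring B]
    [Algebra k A] [Algebra k B] : Type :=
  LinearAlgebra.FreeProduct k (fam A B)

/-- The canonical map `A →ₐ[k] A * B`. -/
noncomputable def inl (k A B : Type) [CommSemiring k] [Semiring A] [Semiring B]
    [Algebra k A] [Algebra k B] : A →ₐ[k] FP k A B :=
  LinearAlgebra.FreeProduct.ι k (fam A B) true

/-- The canonical map `B →ₐ[k] A * B`. -/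
noncomputable def inr (k A B : Type) [CommSemiring k] [Semiring A] [Semiring B]
    [Algebra k A] [Algebra k B] : B →ₐ[k] FP k A B :=
  LinearAlgebra.FreeProduct.ι k (fam A B) false

/-- The image in `A*B` of the `i`-th standard primitive idempotent of `A = k^⊕3`. -/
noncomputable def pgen (k : Type) [Field k] (i : Fin 3) : FP k (Fin 3 → k) (Fin 3 → k) :=
  inl k (Fin 3 → k) (Fin 3 → k) (Pi.single i 1)

/-- The image in `A*B` of the `i`-th standard primitive idempotent of `B = k^⊕3`. -/
noncomputable def qgen (k : Type) [Field k] (i : Fin 3) : FP k (Fin 3 → k) (Fin 3 → k) :=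
  inr k (Fin 3 → k) (Fin 3 → k) (Pi.single i 1)

/-- The quotient of `k^⊕3 * k^⊕3` by the two-sided ideal generated by `[p₁,q₁]` and `[p₂,q₁]`. -/
abbrev Q11 (k : Type) [Field k] : Type :=
  RingQuot (fun u v : FP k (Fin 3 → k) (Fin 3 → k) =>
    (u = pgen k 0 * qgen k 0 - qgen k 0 * pgen k 0 ∨
      u = pgen k 1 * qgen k 0 - qgen k 0 * pgen k 1) ∧ v = 0)

/-!
Letting `q₁` act by zero kills both relations, so it suffices to represent `k³ * k²`, the group
algebra of `PSL₂(ℤ) ≅ ℤ/3 * ℤ/2`: an element `R` with `R³ = 1` gives `p₁, p₂, p₃` as its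
eigenprojections for the three cube roots of unity, and an element `S` with `S² = 1` gives
`q₂, q₃` as its eigenprojections. We take the action of `PSL₂(ℤ)` on binary forms of even degree
`N`, i.e. on polynomials of degree `≤ N`, by fractional linear substitutions. It is irreducible:
`S R = T` is the shift `p ↦ p(X + 1)`, and in characteristic zero `p(X + 1) - p(X)` has degree
exactly `deg p - 1`, so a `T`-stable subspace containing a polynomial of degree `d` contains all
polynomials of degree `≤ d`. Hence a nonzero submodule contains `1`, then `S 1 = Xᴺ`, then
everything.
-/

open Polynomial Finset

section EigenProj

variable {k S : Type*} [Field k] [Ring S] [Algebra k S] {n : ℕ} {g : S}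

noncomputable def eigenProj (n : ℕ) (g : S) (α : k) : S :=
  (n : k)⁻¹ • ∑ m ∈ range n, (α⁻¹ • g) ^ m

lemma geom_sum_mul_of_pow_eq_one {x : S} (hx : x ^ n = 1) :
    (∑ m ∈ range n, x ^ m) * x = ∑ m ∈ range n, x ^ m := by
  have := geom_sum_mul x n
  rwa [hx, sub_self, mul_sub, mul_one, sub_eq_zero] at this

lemma geom_sum_eq_zero_of_pow_eq_one {x : k} (hx : x ^ n = 1) (hx1 : x ≠ 1) :
    ∑ i ∈ range n, x ^ i = 0 := by
  rw [geom_sum_eq hx1, hx, sub_self, zero_div]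

variable [NeZero (n : k)] {α β : k}

lemma eigenProj_mul (hg : g ^ n = 1) (hα : α ^ n = 1) :
    eigenProj n g α * g = α • eigenProj n g α := by
  have hα0 := (IsUnit.of_pow_eq_one hα (NeZero.of_neZero_natCast k).out).ne_zero
  have key := geom_sum_mul_of_pow_eq_one (x := α⁻¹ • g) (n := n)
    (by rw [_root_.smul_pow, inv_pow, hα, hg, inv_one, one_smul])
  rw [mul_smul_comm] at key
  have hs : (∑ m ∈ range n, (α⁻¹ • g) ^ m) * g = α • ∑ m ∈ range n, (α⁻¹ • g) ^ m := by
    rw [← smul_right_inj (inv_ne_zero hα0), smul_smul, inv_mul_cancel₀ hα0, one_smul, key]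
  rw [eigenProj, smul_mul_assoc, hs, smul_comm]

lemma eigenProj_mul_pow (hg : g ^ n = 1) (hα : α ^ n = 1) (m : ℕ) :
    eigenProj n g α * g ^ m = α ^ m • eigenProj n g α := by
  induction m with
  | zero => simp
  | succ m ih =>
    rw [pow_succ, ← mul_assoc, ih, smul_mul_assoc, eigenProj_mul hg hα, smul_smul, pow_succ]

lemma eigenProj_mul_eigenProj (hg : g ^ n = 1) (hα : α ^ n = 1) (β : k) :
    eigenProj n g α * eigenProj n g β
      = ((n : k)⁻¹ * ∑ m ∈ range n, (α / β) ^ m) • eigenProj n g α := by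
  nth_rw 2 [eigenProj]
  simp only [mul_smul_comm, Finset.mul_sum, _root_.smul_pow, eigenProj_mul_pow hg hα, smul_smul,
    ← Finset.sum_smul, div_eq_mul_inv, mul_pow]
  simp only [mul_comm]

lemma eigenProj_mul_eigenProj_of_ne (hg : g ^ n = 1) (hα : α ^ n = 1) (hβ : β ^ n = 1)
    (hαβ : α ≠ β) : eigenProj n g α * eigenProj n g β = 0 := by
  have hβ0 := (IsUnit.of_pow_eq_one hβ (NeZero.of_neZero_natCast k).out).ne_zero
  rw [eigenProj_mul_eigenProj hg hα, geom_sum_eq_zero_of_pow_eq_one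
    (by rw [div_pow, hα, hβ, div_one]) (by rwa [Ne, div_eq_one_iff_eq hβ0]), mul_zero, zero_smul]

variable {ζ : k}

lemma IsPrimitiveRoot.sum_eigenProj (hζ : IsPrimitiveRoot ζ n) (g : S) :
    ∑ i ∈ range n, eigenProj n g (ζ ^ i) = 1 := by
  have hn : 0 < n := Nat.pos_of_ne_zero (NeZero.of_neZero_natCast k).out
  have inner : ∀ m ∈ range n, ∑ i ∈ range n, ((ζ ^ i)⁻¹) ^ m = if m = 0 then (n : k) else 0 := by
    intro m hm
    split_ifs with h0
    · simp [h0]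
    · simp_rw [← inv_pow, ← pow_mul, mul_comm _ m, pow_mul]
      exact geom_sum_eq_zero_of_pow_eq_one (by rw [pow_right_comm, hζ.inv.pow_eq_one, one_pow])
        (hζ.inv.pow_ne_one_of_pos_of_lt h0 (mem_range.1 hm))
  simp only [eigenProj, ← Finset.smul_sum, _root_.smul_pow]
  rw [Finset.sum_comm]
  simp only [← Finset.sum_smul]
  rw [Finset.sum_congr rfl fun m hm => by rw [inner m hm]]
  simp [ite_smul, hn, smul_smul, inv_mul_cancel₀ (NeZero.ne (n : k))]

lemma IsPrimitiveRoot.completeOrthogonalIdempotents_eigenProj (hζ : IsPrimitiveRoot ζ n)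
    (hg : g ^ n = 1) :
    CompleteOrthogonalIdempotents fun i : Fin n => eigenProj n g (ζ ^ (i : ℕ)) := by
  rw [CompleteOrthogonalIdempotents.iff_ortho_complete,
    Fin.sum_univ_eq_sum_range (fun i => eigenProj n g (ζ ^ i))]
  refine ⟨fun i j hij => eigenProj_mul_eigenProj_of_ne hg ?_ ?_ ?_, hζ.sum_eigenProj g⟩
  · rw [pow_right_comm, hζ.pow_eq_one, one_pow]
  · rw [pow_right_comm, hζ.pow_eq_one, one_pow]
  · exact fun h => hij (Fin.ext (hζ.pow_inj i.2 j.2 h))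

lemma IsPrimitiveRoot.sum_smul_eigenProj (hζ : IsPrimitiveRoot ζ n) (hg : g ^ n = 1) :
    ∑ i ∈ range n, ζ ^ i • eigenProj n g (ζ ^ i) = g :=
  calc ∑ i ∈ range n, ζ ^ i • eigenProj n g (ζ ^ i)
      = ∑ i ∈ range n, eigenProj n g (ζ ^ i) * g := Finset.sum_congr rfl fun i _ =>
        (eigenProj_mul hg (by rw [pow_right_comm, hζ.pow_eq_one, one_pow])).symm
    _ = g := by rw [← Finset.sum_mul, hζ.sum_eigenProj, one_mul]

end EigenProj

section PiAlgHom

variable {k S ι : Type*} [Field k] [Ring S] [Algebra k S] [Fintype ι] [DecidableEq ι]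
  {e : ι → S}

noncomputable def CompleteOrthogonalIdempotents.piAlgHom (he : CompleteOrthogonalIdempotents e) :
    (ι → k) →ₐ[k] S :=
  AlgHom.ofLinearMap (Fintype.linearCombination k e)
    (by simpa [Fintype.linearCombination_apply] using he.complete)
    (fun f f' => by
      simp only [Fintype.linearCombination_apply, Pi.mul_apply, Finset.sum_mul, Finset.mul_sum,
        smul_mul_smul, he.mul_eq, smul_ite, smul_zero]
      simp)

lemma CompleteOrthogonalIdempotents.piAlgHom_apply (he : CompleteOrthogonalIdempotents e)
    (f : ι → k) : he.piAlgHom f = ∑ i, f i • e i :=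
  Fintype.linearCombination_apply k e f

end PiAlgHom

namespace Polynomial

variable {k : Type*} [Field k]

lemma coeff_taylor_of_natDegree_eq {p : k[X]} {m : ℕ} (r : k) (hp : p.natDegree = m + 1) :
    (taylor r p).coeff m = p.coeff m + (m + 1) * r * p.leadingCoeff := by
  have hdeg : (hasseDeriv m p).natDegree < 2 :=
    (natDegree_hasseDeriv_le p m).trans_lt (by omega)
  rw [taylor_coeff, eval_eq_sum_range' hdeg]
  simp [Finset.sum_range_succ, hasseDeriv_coeff, leadingCoeff, hp, add_comm 1 m]
  ring

lemma degree_taylor_sub [CharZero k] {p : k[X]} {m : ℕ} {r : k} (hr : r ≠ 0)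
    (hp : p.natDegree = m + 1) : (taylor r p - p).degree = m := by
  have hp0 : p ≠ 0 := by rintro rfl; simp at hp
  have hlt : (taylor r p - p).degree < p.degree := degree_taylor p r ▸
    degree_sub_lt_left (degree_taylor p r) (by rwa [Ne, taylor_eq_zero]) (leadingCoeff_taylor r p)
  have hcoeff : (taylor r p - p).coeff m ≠ 0 := by
    rw [coeff_sub, coeff_taylor_of_natDegree_eq r hp, add_sub_cancel_left]
    exact mul_ne_zero (mul_ne_zero (Nat.cast_add_one_ne_zero m) hr) (leadingCoeff_ne_zero.2 hp0)
  rw [degree_eq_natDegree hp0, hp] at hlt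
  exact degree_eq_of_le_of_coeff_ne_zero (Order.le_of_lt_succ hlt) hcoeff

lemma degreeLE_le_sup_span {p : k[X]} {m : ℕ} (hp : p.degree = m) :
    degreeLE k m ≤ degreeLT k m ⊔ k ∙ p := by
  intro q hq
  have hp0 : p ≠ 0 := by rintro rfl; simp at hp
  have hpm : p.natDegree = m := natDegree_eq_of_degree_eq_some hp
  set c := q.coeff m / p.leadingCoeff
  refine Submodule.mem_sup.2 ⟨q - c • p, ?_, c • p, Submodule.smul_mem _ _
    (Submodule.mem_span_singleton_self p), sub_add_cancel _ _⟩
  rw [mem_degreeLT, degree_lt_iff_coeff_zero]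
  intro j hj
  rcases hj.eq_or_lt with rfl | hj
  · rw [coeff_sub, coeff_smul, smul_eq_mul, ← hpm, ← leadingCoeff, hpm,
      div_mul_cancel₀ _ (leadingCoeff_ne_zero.2 hp0), sub_self]
  · rw [mem_degreeLE] at hq
    rw [coeff_sub, coeff_smul, coeff_eq_zero_of_degree_lt (hq.trans_lt (by exact_mod_cast hj)),
      coeff_eq_zero_of_degree_lt (hp.trans_lt (by exact_mod_cast hj)), smul_zero, sub_zero]

lemma degreeLE_le_of_taylor_mem [CharZero k] {W : Submodule k k[X]} {r : k} (hr : r ≠ 0)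
    (hW : ∀ q ∈ W, taylor r q ∈ W) {p : k[X]} (hp : p ∈ W) (hp0 : p ≠ 0) :
    degreeLE k p.natDegree ≤ W := by
  induction hm : p.natDegree generalizing p with
  | zero =>
    refine (degreeLE_le_sup_span (hm ▸ degree_eq_natDegree hp0)).trans 
      (sup_le ?_ ((Submodule.span_singleton_le_iff_mem _ _).2 hp))
    intro q hq
    simp_all [mem_degreeLT]
  | succ m ih =>
    refine (degreeLE_le_sup_span (hm ▸ degree_eq_natDegree hp0)).trans 
      (sup_le ?_ ((Submodule.span_singleton_le_iff_mem _ _).2 hp))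
    have hq := degree_taylor_sub hr hm
    have hq0 : taylor r p - p ≠ 0 := by rintro h; simp [h] at hq
    rw [degreeLT_succ_eq_degreeLE]
    exact ih (W.sub_mem (hW p hp) hp) hq0 (natDegree_eq_of_degree_eq_some hq)

lemma one_mem_degreeLT {n : ℕ} (hn : n ≠ 0) : (1 : k[X]) ∈ k[X]_n := by
  rw [mem_degreeLT, degree_one]
  exact_mod_cast Nat.pos_of_ne_zero hn

lemma finrank_degreeLT (n : ℕ) : Module.finrank k k[X]_n = n := by
  rw [Module.finrank_eq_card_basis (degreeLT.basis k n), Fintype.card_fin]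

lemma eq_of_eval_eq_of_finite [Infinite k] {p q : k[X]} {s : Set k} (hs : s.Finite)
    (h : ∀ x ∉ s, p.eval x = q.eval x) : p = q :=
  eq_of_infinite_eval_eq p q (hs.infinite_compl.mono fun x hx => h x hx)

lemma degreeLT.linearMap_ext_of_eval [Infinite k] {n : ℕ} {f g : k[X]_n →ₗ[k] k[X]_n}
    {s : Set k} (hs : s.Finite)
    (h : ∀ p, ∀ x ∉ s, (f p : k[X]).eval x = (g p : k[X]).eval x) : f = g :=
  LinearMap.ext fun p => Subtype.ext (eq_of_eval_eq_of_finite hs (h p))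

section Moebius

variable (N : ℕ) (a b c d : k)

/-- `p ↦ (cX + d)ᴺ p((aX + b)/(cX + d))`: the action of `!![a, b; c, d]` on binary forms of
degree `N`, written in the affine coordinate `X`. -/
noncomputable def moebiusSubst : k[X] →ₗ[k] k[X] :=
  ∑ i ∈ range (N + 1), (lcoeff k i).smulRight ((C a * X + C b) ^ i * (C c * X + C d) ^ (N - i))

variable {N a b c d}

lemma moebiusSubst_apply (p : k[X]) : moebiusSubst N a b c d p
    = ∑ i ∈ range (N + 1), p.coeff i • ((C a * X + C b) ^ i * (C c * X + C d) ^ (N - i)) := by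
  simp [moebiusSubst]

lemma moebiusSubst_one : moebiusSubst N a b c d 1 = (C c * X + C d) ^ N := by
  simp [moebiusSubst_apply, coeff_one]

lemma moebiusSubst_mem (p : k[X]) : moebiusSubst N a b c d p ∈ k[X]_(N + 1) := by
  rw [moebiusSubst_apply, degreeLT_succ_eq_degreeLE]
  refine Submodule.sum_mem _ fun i hi => Submodule.smul_mem _ _ ?_
  rw [mem_degreeLE]
  refine degree_le_of_natDegree_le (natDegree_mul_le.trans ?_)
  have := mem_range.1 hi
  have h1 := natDegree_pow_le_of_le i (natDegree_linear_le (a := a) (b := b))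
  have h2 := natDegree_pow_le_of_le (N - i) (natDegree_linear_le (a := c) (b := d))
  omega

lemma eval_moebiusSubst {p : k[X]} (hp : p ∈ k[X]_(N + 1)) {x : k} (hx : c * x + d ≠ 0) :
    (moebiusSubst N a b c d p).eval x = (c * x + d) ^ N * p.eval ((a * x + b) / (c * x + d)) := by
  rw [degreeLT_succ_eq_degreeLE, mem_degreeLE] at hp
  rw [moebiusSubst_apply, eval_finsetSum,
    eval_eq_sum_range' (Nat.lt_succ_of_le (natDegree_le_of_degree_le hp)), Finset.mul_sum]
  refine Finset.sum_congr rfl fun i hi => ?_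
  simp only [eval_smul, eval_mul, eval_pow, eval_add, eval_C, eval_X, smul_eq_mul]
  generalize c * x + d = y at hx ⊢
  rw [div_pow, ← pow_mul_pow_sub _ (Nat.lt_succ_iff.1 (mem_range.1 hi))]
  field_simp

end Moebius

section Operators

/- The elements `S : z ↦ -1/z`, `R : z ↦ 1 - 1/z` and `T : z ↦ z + 1` of `PSL₂(ℤ)`; their
relations hold only for even `N`, where `-1 ∈ SL₂(ℤ)` acts by `(-1)ᴺ = 1`. -/

variable (k) (N : ℕ)

noncomputable def opS : Module.End k k[X]_(N + 1) :=
  (moebiusSubst N 0 (-1) 1 0).restrict fun p _ => moebiusSubst_mem p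

noncomputable def opR : Module.End k k[X]_(N + 1) :=
  (moebiusSubst N 1 (-1) 1 0).restrict fun p _ => moebiusSubst_mem p

noncomputable def opT : Module.End k k[X]_(N + 1) :=
  (taylor 1).restrict fun _ hp => taylor_mem_degreeLT.2 hp

variable {k N}

lemma eval_opS (p : k[X]_(N + 1)) {x : k} (hx : x ≠ 0) :
    (opS k N p : k[X]).eval x = x ^ N * (p : k[X]).eval (-x⁻¹) := by
  rw [opS, LinearMap.coe_restrict_apply,
    eval_moebiusSubst (a := 0) (b := -1) (c := 1) (d := 0) p.2 (by simpa using hx)]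
  simp [div_eq_mul_inv]

lemma eval_opR (p : k[X]_(N + 1)) {x : k} (hx : x ≠ 0) :
    (opR k N p : k[X]).eval x = x ^ N * (p : k[X]).eval (1 - x⁻¹) := by
  rw [opR, LinearMap.coe_restrict_apply,
    eval_moebiusSubst (a := 1) (b := -1) (c := 1) (d := 0) p.2 (by simpa using hx)]
  simp only [one_mul, add_zero, ← sub_eq_add_neg, sub_div, div_self hx, one_div]

lemma eval_opT (p : k[X]_(N + 1)) (x : k) :
    (opT k N p : k[X]).eval x = (p : k[X]).eval (x + 1) :=
  taylor_eval _ _ _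

lemma opS_one : (opS k N ⟨1, one_mem_degreeLT N.succ_ne_zero⟩ : k[X]) = X ^ N := by
  simp [opS, moebiusSubst_one]

variable [Infinite k]

lemma opS_sq (hN : Even N) : opS k N ^ 2 = 1 := by
  refine degreeLT.linearMap_ext_of_eval (Set.finite_singleton 0) fun p x hx => ?_
  have hx : x ≠ 0 := hx
  rw [sq, Module.End.mul_apply, eval_opS _ hx, eval_opS _ (by simpa using hx), ← mul_assoc,
    ← mul_pow]
  simp [hN.neg_pow, hx]

lemma opR_pow_three (hN : Even N) : opR k N ^ 3 = 1 := by
  refine degreeLT.linearMap_ext_of_eval (s := {0, 1}) (by simp) fun p x hx => ?_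
  have hx0 : x ≠ 0 := fun h => hx (.inl h)
  have hx1 : x ≠ 1 := fun h => hx (.inr h)
  have hy : 1 - x⁻¹ ≠ 0 := sub_ne_zero.2 (inv_ne_one.2 hx1).symm
  have hz : 1 - (1 - x⁻¹)⁻¹ ≠ 0 := sub_ne_zero.2 (inv_ne_one.2 (by simpa using hx0)).symm
  rw [pow_three, Module.End.mul_apply, Module.End.mul_apply, eval_opR _ hx0, eval_opR _ hy,
    eval_opR _ hz, ← mul_assoc, ← mul_assoc, ← mul_pow, ← mul_pow]
  have hx1' : x - 1 ≠ 0 := sub_ne_zero.2 hx1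
  rw [show x * (1 - x⁻¹) * (1 - (1 - x⁻¹)⁻¹) = -1 by field_simp; ring,
    show 1 - (1 - (1 - x⁻¹)⁻¹)⁻¹ = x by field_simp; ring, hN.neg_one_pow, one_mul]
  rfl

lemma opS_mul_opR (hN : Even N) : opS k N * opR k N = opT k N := by
  refine degreeLT.linearMap_ext_of_eval (Set.finite_singleton 0) fun p x hx => ?_
  have hx : x ≠ 0 := hx
  rw [Module.End.mul_apply, eval_opS _ hx, eval_opR _ (by simpa using hx), eval_opT, ← mul_assoc,
    ← mul_pow]
  simp [hN.neg_pow, hx, add_comm]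

end Operators

lemma eq_top_of_opS_opT_mem [CharZero k] {N : ℕ} {W : Submodule k k[X]_(N + 1)} (hW : W ≠ ⊥)
    (hS : ∀ v ∈ W, opS k N v ∈ W) (hT : ∀ v ∈ W, opT k N v ∈ W) : W = ⊤ := by
  set W' := W.map (k[X]_(N + 1)).subtype
  have mem_W' : ∀ v : k[X]_(N + 1), (v : k[X]) ∈ W' ↔ v ∈ W := fun v =>
    ⟨fun ⟨w, hw, hwv⟩ => Subtype.ext hwv ▸ hw, fun hv => ⟨v, hv, rfl⟩⟩
  have hW' : ∀ q ∈ W', taylor 1 q ∈ W' := by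
    rintro _ ⟨v, hv, rfl⟩
    exact ⟨_, hT v hv, rfl⟩
  obtain ⟨v, hv, hv0⟩ := Submodule.exists_mem_ne_zero_of_ne_bot hW
  have h1 : (⟨1, one_mem_degreeLT N.succ_ne_zero⟩ : k[X]_(N + 1)) ∈ W := by
    rw [← mem_W']
    refine degreeLE_le_of_taylor_mem one_ne_zero hW' ((mem_W' v).2 hv)
      (fun h => hv0 (Submodule.coe_eq_zero.1 h)) ?_
    rw [mem_degreeLE, degree_one]
    exact_mod_cast Nat.zero_le _
  have hXN : degreeLE k N ≤ W' := by
    have := degreeLE_le_of_taylor_mem one_ne_zero hW' ((mem_W' _).2 (hS _ h1))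
      (by rw [opS_one]; exact pow_ne_zero _ X_ne_zero)
    rwa [opS_one, natDegree_X_pow] at this
  refine eq_top_iff.2 fun v _ => (mem_W' v).1 (hXN ?_)
  rw [← degreeLT_succ_eq_degreeLE]
  exact v.2

end Polynomial

section Representation

variable {k : Type} [Field k] [CharZero k] {ω : k} (hω : IsPrimitiveRoot ω 3) {N : ℕ}
  (hN : Even N)

noncomputable def repLeft : (Fin 3 → k) →ₐ[k] Module.End k k[X]_(N + 1) :=
  (hω.completeOrthogonalIdempotents_eigenProj (S := Module.End k k[X]_(N + 1))
    (opR_pow_three (k := k) hN)).piAlgHom (k := k)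

/-- `q₁ ↦ 0` and `q₂, q₃ ↦ (1 ± S)/2`. -/
noncomputable def repRight : (Fin 3 → k) →ₐ[k] Module.End k k[X]_(N + 1) :=
  ((IsPrimitiveRoot.neg_one (R := k) 0 two_ne_zero.symm).completeOrthogonalIdempotents_eigenProj
    (S := Module.End k k[X]_(N + 1)) (opS_sq (k := k) hN)).piAlgHom (k := k)
    |>.comp (AlgHom.pi fun i : Fin 2 => Pi.evalAlgHom k _ i.succ)

noncomputable def repFreeProduct :
    FP k (Fin 3 → k) (Fin 3 → k) →ₐ[k] Module.End k k[X]_(N + 1) :=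
  LinearAlgebra.FreeProduct.lift k (fam (Fin 3 → k) (Fin 3 → k)) fun {i} =>
    match i with
    | true => repLeft hω hN
    | false => repRight hN

lemma repFreeProduct_inl (f : Fin 3 → k) :
    repFreeProduct hω hN (inl k _ _ f) = repLeft hω hN f :=
  DFunLike.congr_fun (LinearAlgebra.FreeProduct.lift_comp_ι (R := k)
    (A := fam (Fin 3 → k) (Fin 3 → k)) (i := true) _) f

lemma repFreeProduct_inr (f : Fin 3 → k) :
    repFreeProduct hω hN (inr k _ _ f) = repRight hN f :=
  DFunLike.congr_fun (LinearAlgebra.FreeProduct.lift_comp_ι (R := k)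
    (A := fam (Fin 3 → k) (Fin 3 → k)) (i := false) _) f

lemma repFreeProduct_qgen_zero : repFreeProduct hω hN (qgen k 0) = 0 := by
  have : (AlgHom.pi fun i : Fin 2 => Pi.evalAlgHom k (fun _ => k) i.succ) (Pi.single 0 1) = 0 := by
    ext i
    simp [Fin.succ_ne_zero]
  rw [qgen, repFreeProduct_inr, repRight, AlgHom.comp_apply, this, map_zero]

noncomputable def repQ11 : Q11 k →ₐ[k] Module.End k k[X]_(N + 1) :=
  RingQuot.liftAlgHom k ⟨repFreeProduct hω hN, by
    rintro x y ⟨hx | hx, rfl⟩ <;> simp [hx, repFreeProduct_qgen_zero]⟩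

lemma repQ11_mk (x : FP k (Fin 3 → k) (Fin 3 → k)) :
    repQ11 hω hN (RingQuot.mkAlgHom k _ x) = repFreeProduct hω hN x :=
  RingQuot.liftAlgHom_mkAlgHom_apply ..

lemma opR_mem_range_repQ11 : opR k N ∈ (repQ11 hω hN).range := by
  refine (AlgHom.mem_range _).2 ⟨RingQuot.mkAlgHom k _ (inl k _ _ fun i => ω ^ (i : ℕ)), ?_⟩
  rw [repQ11_mk, repFreeProduct_inl, repLeft, CompleteOrthogonalIdempotents.piAlgHom_apply,
    Fin.sum_univ_eq_sum_range (fun i => ω ^ i • eigenProj 3 (opR k N) (ω ^ i))]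
  exact hω.sum_smul_eigenProj (opR_pow_three hN)

lemma opS_mem_range_repQ11 : opS k N ∈ (repQ11 hω hN).range := by
  refine (AlgHom.mem_range _).2
    ⟨RingQuot.mkAlgHom k _ (inr k _ _ (Fin.cons 0 fun i : Fin 2 => (-1) ^ (i : ℕ))), ?_⟩
  rw [repQ11_mk, repFreeProduct_inr, repRight, AlgHom.comp_apply,
    CompleteOrthogonalIdempotents.piAlgHom_apply]
  simp only [AlgHom.pi_apply, Pi.evalAlgHom_apply, Fin.cons_succ]
  rw [Fin.sum_univ_eq_sum_range (fun i => (-1 : k) ^ i • eigenProj 2 (opS k N) ((-1) ^ i))]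
  exact (IsPrimitiveRoot.neg_one 0 two_ne_zero.symm).sum_smul_eigenProj (opS_sq hN)

lemma opT_mem_range_repQ11 : opT k N ∈ (repQ11 hω hN).range := by
  rw [← opS_mul_opR hN]
  exact mul_mem (opS_mem_range_repQ11 hω hN) (opR_mem_range_repQ11 hω hN)

end Representation

theorem statement11 (k : Type) [Field k] [IsAlgClosed k] [CharZero k] :
    ∀ n : ℕ, ∃ (M : Type) (_ : AddCommGroup M) (_ : Module (Q11 k) M) (_ : Module k M)
      (_ : IsScalarTower k (Q11 k) M),
      IsSimpleModule (Q11 k) M ∧ Module.Finite k M ∧ n < Module.finrank k M := by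
  intro n
  obtain ⟨ω, hω⟩ := HasEnoughRootsOfUnity.exists_primitiveRoot k 3
  have hN : Even (2 * n) := even_two_mul n
  let ψ := repQ11 hω hN
  let : Module (Q11 k) k[X]_(2 * n + 1) := Module.compHom _ ψ.toRingHom
  have tower : IsScalarTower k (Q11 k) k[X]_(2 * n + 1) :=
    ⟨fun c x v => show ψ (c • x) v = c • ψ x v by rw [map_smul, LinearMap.smul_apply]⟩
  have hrank := finrank_degreeLT (k := k) (2 * n + 1)
  have : Nontrivial k[X]_(2 * n + 1) := Module.nontrivial_of_finrank_pos (R := k) (by omega)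
  refine ⟨k[X]_(2 * n + 1), inferInstance, inferInstance, inferInstance, tower,
    { eq_bot_or_eq_top := fun W => ?_ }, inferInstance, by omega⟩
  refine or_iff_not_imp_left.2 fun hW => Submodule.restrictScalars_injective k _ _ ?_
  have hinv : ∀ f ∈ ψ.range, ∀ v ∈ W.restrictScalars k, f v ∈ W.restrictScalars k := by
    rintro _ ⟨x, rfl⟩ v hv
    exact W.smul_mem x hv
  rw [Submodule.restrictScalars_top]
  exact eq_top_of_opS_opT_mem (by simpa using hW) (hinv _ (opS_mem_range_repQ11 hω hN))
    (hinv _ (opT_mem_range_repQ11 hω hN))
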